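/- arXiv:2602.01583 — 3 statements merged into one kernel-verified Lean document; each statement's English description precedes it below -/
import Mathlib

section
/- Let 𝔽 be a field and F ∈ 𝔽[X₁,…,Xₙ] a non-homogeneous polynomial of total degree d, with decomposition F = F_d + H where F_d is the leading form of F and H = F − F_d, so that the degree-gap of F is γ(F) = d − deg H. If F_d is squarefree, then every divisor G of F has degree-gap at least γ(F); concretely, for every polynomial G dividing F and every natural number j with deg G − γ(F) < j < deg G, the homogeneous component of G in degree j is zero. -/
/-!
Write `F = G K` with `g = deg G`, `k = deg K`, and let `G_j` be the nonzero component of `G` of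
highest degree `j < g`. The leading form `F_d = G_g K_k` is squarefree, so `G_g` and `K_k` are
coprime. Modulo `G_g` the component `F_{j+k}` is `G_j K_k`; if it vanished, `G_g` would divide
`G_j`, impossible since `j < g`. So `H = F - F_d` has a nonzero component in degree `j + k < d`,
whence `deg H ≥ j + k`, i.e. `j ≤ g - γ(F)`.
-/

open MvPolynomial

theorem Nat.exists_le_maximal_lt {P : ℕ → Prop} {j g : ℕ} (hj : P j) (hjg : j < g) :
    ∃ i, j ≤ i ∧ i < g ∧ P i ∧ ∀ a, i < a → a < g → ¬P a := by
  classical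
  refine ⟨Nat.findGreatest P (g - 1), Nat.le_findGreatest (by omega) hj,
    (Nat.findGreatest_le _).trans_lt (by omega), Nat.findGreatest_spec (by omega) hj,
    fun a ha hag => Nat.findGreatest_is_greatest ha (by omega)⟩

namespace MvPolynomial

open Finset

section CommSemiring

variable {σ R : Type*} [CommSemiring R]

attribute [local instance] gradedAlgebra in
theorem homogeneousComponent_mul (p q : MvPolynomial σ R) (m : ℕ) :
    homogeneousComponent m (p * q) =
      ∑ ij ∈ antidiagonal m, homogeneousComponent ij.1 p * homogeneousComponent ij.2 q := by
  simp only [← decomposition.decompose'_apply]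
  exact congr(($(DirectSum.decompose_mul (homogeneousSubmodule σ R) p q) m : MvPolynomial σ R)).trans
    (DirectSum.coe_mul_apply_eq_sum_antidiagonal _ _ _ _)

theorem homogeneousComponent_totalDegree_ne_zero {p : MvPolynomial σ R} (hp : p ≠ 0) :
    homogeneousComponent p.totalDegree p ≠ 0 := by
  classical
  obtain ⟨d, hd, hdeg⟩ := exists_mem_eq_sup p.support (support_nonempty.mpr hp) Finsupp.degree
  rw [Ne, ← support_eq_empty, support_homogeneousComponent, filter_eq_empty_iff]
  exact fun h => h hd hdeg.symm

theorem homogeneousComponent_totalDegree_add_mul (p q : MvPolynomial σ R) :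
    homogeneousComponent (p.totalDegree + q.totalDegree) (p * q) =
      homogeneousComponent p.totalDegree p * homogeneousComponent q.totalDegree q := by
  rw [homogeneousComponent_mul, sum_eq_single (p.totalDegree, q.totalDegree)]
  · rintro ⟨a, b⟩ hab hne
    rw [HasAntidiagonal.mem_antidiagonal] at hab
    obtain ha | hb : p.totalDegree < a ∨ q.totalDegree < b := by
      by_contra! h
      exact hne (Prod.ext (by omega) (by omega))
    · rw [homogeneousComponent_eq_zero _ p ha, zero_mul]
    · rw [homogeneousComponent_eq_zero _ q hb, mul_zero]
  · exact fun h => (h (HasAntidiagonal.mem_antidiagonal.mpr rfl)).elim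

end CommSemiring

section CommRing

variable {σ R : Type*} [CommRing R]

/-- In degree `j + deg q`, a product `p_a q_b` other than `p_j q_{deg q}` needs `j < a ≤ deg p`,
so by the gap it vanishes unless `a = deg p`. -/
theorem homogeneousComponent_totalDegree_dvd_homogeneousComponent_mul_sub
    {p q : MvPolynomial σ R} {j : ℕ}
    (hgap : ∀ a, j < a → a < p.totalDegree → homogeneousComponent a p = 0) :
    homogeneousComponent p.totalDegree p ∣ homogeneousComponent (j + q.totalDegree) (p * q) -
      homogeneousComponent j p * homogeneousComponent q.totalDegree q := by
  have hjq : (j, q.totalDegree) ∈ antidiagonal (j + q.totalDegree) :=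
    HasAntidiagonal.mem_antidiagonal.mpr rfl
  rw [homogeneousComponent_mul, ← add_sum_erase _ _ hjq, add_sub_cancel_left]
  refine dvd_sum fun ⟨a, b⟩ hab => ?_
  rw [mem_erase, ne_eq, HasAntidiagonal.mem_antidiagonal, Prod.mk.injEq] at hab
  rcases lt_or_ge p.totalDegree a with hpa | hap
  · simp only [homogeneousComponent_eq_zero _ p hpa, zero_mul, dvd_zero]
  rcases lt_or_ge q.totalDegree b with hqb | hbq
  · simp only [homogeneousComponent_eq_zero _ q hqb, mul_zero, dvd_zero]
  rcases hap.eq_or_lt with rfl | hap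
  · exact dvd_mul_right _ _
  · simp only [hgap a (by omega) hap, zero_mul, dvd_zero]

theorem homogeneousComponent_totalDegree_mul_of_isDomain [IsDomain R] {p q : MvPolynomial σ R}
    (hp : p ≠ 0) (hq : q ≠ 0) :
    homogeneousComponent (p * q).totalDegree (p * q) =
      homogeneousComponent p.totalDegree p * homogeneousComponent q.totalDegree q := by
  rw [totalDegree_mul_of_isDomain hp hq, homogeneousComponent_totalDegree_add_mul]

end CommRing

theorem homogeneousComponent_add_totalDegree_mul_ne_zero {σ K : Type*} [Field K]
    {p q : MvPolynomial σ K} {j : ℕ}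
    (hrel : IsRelPrime (homogeneousComponent p.totalDegree p)
      (homogeneousComponent q.totalDegree q))
    (hj : homogeneousComponent j p ≠ 0) (hjp : j < p.totalDegree)
    (hgap : ∀ a, j < a → a < p.totalDegree → homogeneousComponent a p = 0) :
    homogeneousComponent (j + q.totalDegree) (p * q) ≠ 0 := by
  intro h
  have hdvd := homogeneousComponent_totalDegree_dvd_homogeneousComponent_mul_sub (q := q) hgap
  rw [h, zero_sub, dvd_neg] at hdvd
  have hp : p ≠ 0 := by rintro rfl; simp at hj
  have hle := totalDegree_le_of_dvd_of_isDomain (hrel.dvd_of_dvd_mul_right hdvd) hj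
  rw [(homogeneousComponent_isHomogeneous _ _).totalDegree
    (homogeneousComponent_totalDegree_ne_zero hp),
    (homogeneousComponent_isHomogeneous _ _).totalDegree hj] at hle
  omega

end MvPolynomial

theorem degreeGap_of_divisor_general {n : ℕ} {𝔽 : Type*} [Field 𝔽]
    (F H : MvPolynomial (Fin n) 𝔽)
    (hH : H = F - homogeneousComponent F.totalDegree F)
    (hsf : Squarefree (homogeneousComponent F.totalDegree F)) :
    ∀ G : MvPolynomial (Fin n) 𝔽, G ∣ F →
      ∀ j : ℕ, (G.totalDegree : ℤ) - ((F.totalDegree : ℤ) - (H.totalDegree : ℤ)) < (j : ℤ) →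
        j < G.totalDegree → homogeneousComponent j G = 0 := by
  rintro G ⟨K, rfl⟩ j₀ hlow hj₀G
  by_contra hj₀
  obtain ⟨hG, hK⟩ : G ≠ 0 ∧ K ≠ 0 := mul_ne_zero_iff.mp fun h => by simp [h] at hsf
  obtain ⟨j, hj₀j, hjG, hj, hgap⟩ :=
    Nat.exists_le_maximal_lt (P := fun a => homogeneousComponent a G ≠ 0) hj₀ hj₀G
  rw [homogeneousComponent_totalDegree_mul_of_isDomain hG hK] at hsf
  have hF := homogeneousComponent_add_totalDegree_mul_ne_zero (squarefree_mul_iff.mp hsf).1 hj hjG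
    fun a ha haG => not_not.mp (hgap a ha haG)
  have hdeg := totalDegree_mul_of_isDomain hG hK
  have hHj : homogeneousComponent (j + K.totalDegree) H ≠ 0 := by
    rwa [hH, map_sub, homogeneousComponent_of_mem (homogeneousComponent_mem _ _), if_neg (by omega),
      sub_zero]
  have hjH : j + K.totalDegree ≤ H.totalDegree :=
    le_of_not_gt fun h => hHj (homogeneousComponent_eq_zero _ H h)
  omega

/-- If `F = F_d + H` (leading form plus lower part), `H ≠ 0` (so `F` is non-homogeneous),
and the leading form `F_d` is squarefree, then every divisor `G` of `F` has degree-gap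
at least `γ(F) = deg F − deg H`: all homogeneous components of `G` in degrees strictly
between `deg G − γ(F)` and `deg G` vanish. -/
theorem degreeGap_of_divisor {n : ℕ} {𝔽 : Type*} [Field 𝔽]
    (F H : MvPolynomial (Fin n) 𝔽)
    (hH : H = F - homogeneousComponent F.totalDegree F)
    (hH0 : H ≠ 0)
    (hsf : Squarefree (homogeneousComponent F.totalDegree F)) :
    ∀ G : MvPolynomial (Fin n) 𝔽, G ∣ F →
      ∀ j : ℕ, (G.totalDegree : ℤ) - ((F.totalDegree : ℤ) - (H.totalDegree : ℤ)) < (j : ℤ) →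
        j < G.totalDegree → homogeneousComponent j G = 0 :=
  degreeGap_of_divisor_general F H hH hsf
end

section
/- Let 𝔽 be a field and F = F_d + F_{d−γ₁} + ⋯ + F_{d−γ_m} ∈ 𝔽[X₁,…,Xₙ], where F_d and each F_{d−γ_i} are nonzero homogeneous polynomials of degrees d = deg F and d−γ_i respectively, with 0 < γ₁ < ⋯ < γ_m ≤ d, and these are all the nonzero homogeneous components of F. Assume F_d is squarefree and the homogeneous components F_d, F_{d−γ₁}, …, F_{d−γ_m} have no common nonconstant factor. Suppose γ_i ∉ span_ℕ{γ₁, …, γ_{i−1}} for some index i, and F = P·Q with P, Q nonzero of degrees s and t respectively. Denote by P_j (resp. Q_j) the homogeneous component of P (resp. Q) in degree j. Then the homogeneous component of F in degree d−γ_i equals P_s·Q_{t−γ_i} + P_{s−γ_i}·Q_t. -/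
/-!
Write `s = deg P`, `t = deg Q`; then `s + t = d` and `F_d = P_s Q_t`, so squarefreeness of `F_d`
makes `P_s` and `Q_t` coprime. Call `s - a` a gap of `P` when `P_a ≠ 0`; the gaps of `F` are `0`
and the `γ_j`. By strong induction every gap of `P` or `Q` is an ℕ-combination of gaps of `F`:
if `s - a` is a gap of `P` and `F_{a+t} = 0`, some cross term `P_{a'} Q_{b'}` with `a' < s`,
`b' < t`, `a' + b' = a + t` is nonzero (otherwise `P_s ∣ P_a Q_t`, hence `P_s ∣ P_a`, impossible
in lower degree), and `s - a = (s - a') + (t - b')` is a sum of smaller gaps. In degree `d - γ_i`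
a nonzero cross term would likewise write `γ_i` as a sum of gaps smaller than `γ_i`, hence as an
ℕ-combination of `γ_1, …, γ_{i-1}`. So all cross terms vanish and only
`P_s Q_{t-γ_i} + P_{s-γ_i} Q_t` remains.
-/

/-- The homogeneous component of a multivariate polynomial in an integer degree `j`:
it is the usual homogeneous component for `j ≥ 0`, and `0` for negative `j`. -/
noncomputable def homComponentZ {n : ℕ} {𝔽 : Type*} [Field 𝔽]
    (P : MvPolynomial (Fin n) 𝔽) (j : ℤ) : MvPolynomial (Fin n) 𝔽 :=
  if 0 ≤ j then MvPolynomial.homogeneousComponent j.toNat P else 0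

open MvPolynomial

open Finset

namespace MvPolynomial

section CommSemiring

variable {σ R : Type*} [CommSemiring R]

theorem homogeneousComponent_mul_s6 (P Q : MvPolynomial σ R) (k : ℕ) :
    homogeneousComponent k (P * Q) =
      ∑ ab ∈ antidiagonal k, homogeneousComponent ab.1 P * homogeneousComponent ab.2 Q := by
  classical
  ext m
  simp only [coeff_homogeneousComponent, coeff_sum, coeff_mul, ite_zero_mul_ite_zero]
  rw [sum_comm, ite_sum_zero]
  refine sum_congr rfl fun uv huv => ?_
  have hdeg : uv.1.degree + uv.2.degree = m.degree := by
    rw [← HasAntidiagonal.mem_antidiagonal.mp huv, map_add]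
  simp only [← Prod.mk.injEq, Prod.mk.eta, sum_ite_eq, HasAntidiagonal.mem_antidiagonal, hdeg]

theorem homogeneousComponent_mul_homogeneousComponent_eq_zero {P Q : MvPolynomial σ R} {a b : ℕ}
    (h : P.totalDegree < a ∨ Q.totalDegree < b) :
    homogeneousComponent a P * homogeneousComponent b Q = 0 := by
  rcases h with h | h <;> simp [homogeneousComponent_eq_zero _ _ h]

theorem homogeneousComponent_totalDegree_add_mul_s6 (P Q : MvPolynomial σ R) :
    homogeneousComponent (P.totalDegree + Q.totalDegree) (P * Q) =
      homogeneousComponent P.totalDegree P * homogeneousComponent Q.totalDegree Q := by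
  rw [homogeneousComponent_mul_s6, sum_eq_single_of_mem (P.totalDegree, Q.totalDegree) (by simp)]
  rintro ⟨a, b⟩ hab hne
  rw [HasAntidiagonal.mem_antidiagonal] at hab
  apply homogeneousComponent_mul_homogeneousComponent_eq_zero
  by_contra! h
  exact hne (Prod.ext (by omega) (by omega))

theorem homogeneousComponent_totalDegree_add_sub_mul {P Q : MvPolynomial σ R} {e : ℕ}
    (he : 0 < e) (he_le : e ≤ P.totalDegree + Q.totalDegree)
    (hcross : ∀ a < P.totalDegree, ∀ b < Q.totalDegree, a + b + e = P.totalDegree + Q.totalDegree →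
      homogeneousComponent a P * homogeneousComponent b Q = 0) :
    homogeneousComponent (P.totalDegree + Q.totalDegree - e) (P * Q) =
      (if e ≤ Q.totalDegree then
        homogeneousComponent P.totalDegree P * homogeneousComponent (Q.totalDegree - e) Q else 0) +
      (if e ≤ P.totalDegree then
        homogeneousComponent (P.totalDegree - e) P * homogeneousComponent Q.totalDegree Q else 0) := by
  set s := P.totalDegree with hs
  set t := Q.totalDegree with ht
  clear_value s t
  have hsplit : ∀ c ∈ antidiagonal (s + t - e),
      homogeneousComponent c.1 P * homogeneousComponent c.2 Q =
        (if c.1 = s then homogeneousComponent c.1 P * homogeneousComponent c.2 Q else 0) +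
        (if c.2 = t then homogeneousComponent c.1 P * homogeneousComponent c.2 Q else 0) := by
    rintro ⟨a, b⟩ hab
    rw [HasAntidiagonal.mem_antidiagonal] at hab
    dsimp only
    by_cases ha : a = s
    · rw [if_pos ha, if_neg (by omega), add_zero]
    by_cases hb : b = t
    · rw [if_neg ha, if_pos hb, zero_add]
    rw [if_neg ha, if_neg hb, add_zero]
    rcases lt_or_gt_of_ne ha with ha | ha
    · rcases lt_or_gt_of_ne hb with hb | hb
      · exact hcross a ha b hb (by omega)
      · exact homogeneousComponent_mul_homogeneousComponent_eq_zero (Or.inr (ht ▸ hb))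
    · exact homogeneousComponent_mul_homogeneousComponent_eq_zero (Or.inl (hs ▸ ha))
  rw [homogeneousComponent_mul_s6, sum_congr rfl hsplit, sum_add_distrib, ← sum_filter, ← sum_filter,
    HasAntidiagonal.filter_fst_eq_antidiagonal _ s, HasAntidiagonal.filter_snd_eq_antidiagonal _ t]
  congr 1 <;> split_ifs <;> first | omega | simp only [sum_singleton, sum_empty]
  · rw [show s + t - e - s = t - e by omega]
  · rw [show s + t - e - t = s - e by omega]

def homogeneousGaps (P : MvPolynomial σ R) : Set ℕ :=
  {e | ∃ a, homogeneousComponent a P ≠ 0 ∧ P.totalDegree - a = e}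

section HomogeneousSum

variable {ι : Type*} [Fintype ι] (Fd : MvPolynomial σ R) (G : ι → MvPolynomial σ R) {d : ℕ}
  {γ : ι → ℕ}

theorem homogeneousComponent_add_sum (hFd : Fd.IsHomogeneous d)
    (hG : ∀ j, (G j).IsHomogeneous (d - γ j)) (k : ℕ) :
    homogeneousComponent k (Fd + ∑ j, G j) =
      (if k = d then Fd else 0) + ∑ j, if k = d - γ j then G j else 0 := by
  rw [map_add, map_sum, homogeneousComponent_of_mem hFd]
  exact congrArg _ (sum_congr rfl fun j _ => homogeneousComponent_of_mem (hG j))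

theorem homogeneousComponent_add_sum_self (hFd : Fd.IsHomogeneous d)
    (hG : ∀ j, (G j).IsHomogeneous (d - γ j)) (hγ_pos : ∀ j, 0 < γ j) (hγ_le : ∀ j, γ j ≤ d) :
    homogeneousComponent d (Fd + ∑ j, G j) = Fd := by
  rw [homogeneousComponent_add_sum Fd G hFd hG, if_pos rfl,
    sum_eq_zero fun j _ => if_neg (by have := hγ_pos j; have := hγ_le j; omega), add_zero]

theorem homogeneousGaps_add_sum_subset (hFd : Fd.IsHomogeneous d)
    (hG : ∀ j, (G j).IsHomogeneous (d - γ j)) (hγ_le : ∀ j, γ j ≤ d)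
    (hdeg : (Fd + ∑ j, G j).totalDegree = d) :
    homogeneousGaps (Fd + ∑ j, G j) ⊆ insert 0 (Set.range γ) := by
  rintro _ ⟨k, hk, rfl⟩
  rw [homogeneousComponent_add_sum Fd G hFd hG] at hk
  rw [hdeg]
  by_cases hkd : k = d
  · exact Or.inl (by omega)
  rw [if_neg hkd, zero_add] at hk
  obtain ⟨j, -, hj⟩ := exists_ne_zero_of_sum_ne_zero hk
  exact Or.inr ⟨j, by rw [(ite_ne_right_iff.mp hj).1, Nat.sub_sub_self (hγ_le j)]⟩

end HomogeneousSum

end CommSemiring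

section Domain

variable {σ R : Type*} [CommRing R] [IsDomain R]

theorem IsHomogeneous.not_dvd_of_lt {A B : MvPolynomial σ R} {a b : ℕ} (hA : A.IsHomogeneous a)
    (hB : B.IsHomogeneous b) (hB0 : B ≠ 0) (hba : b < a) : ¬A ∣ B := by
  intro hAB
  have hA0 : A ≠ 0 := by
    rintro rfl
    exact hB0 (zero_dvd_iff.mp hAB)
  have := totalDegree_le_of_dvd_of_isDomain hAB hB0
  rw [hA.totalDegree hA0, hB.totalDegree hB0] at this
  omega

variable [UniqueFactorizationMonoid R]

theorem exists_homogeneousComponent_mul_ne_zero_of_lt {P Q : MvPolynomial σ R}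
    (hcop : IsRelPrime (homogeneousComponent P.totalDegree P)
      (homogeneousComponent Q.totalDegree Q))
    {a : ℕ} (ha : a < P.totalDegree) (hPa : homogeneousComponent a P ≠ 0)
    (hzero : homogeneousComponent (a + Q.totalDegree) (P * Q) = 0) :
    ∃ a' < P.totalDegree, ∃ b' < Q.totalDegree, a' + b' = a + Q.totalDegree ∧
      homogeneousComponent a' P * homogeneousComponent b' Q ≠ 0 := by
  by_contra! hcross
  have hsum := homogeneousComponent_totalDegree_add_sub_mul (e := P.totalDegree - a)
    (by omega) (by omega) fun a' ha' b' hb' h => hcross a' ha' b' hb' (by omega)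
  rw [show P.totalDegree + Q.totalDegree - (P.totalDegree - a) = a + Q.totalDegree by omega,
    hzero, show P.totalDegree - (P.totalDegree - a) = a by omega, if_pos (Nat.sub_le _ _)] at hsum
  have hdvd : homogeneousComponent P.totalDegree P ∣
      homogeneousComponent a P * homogeneousComponent Q.totalDegree Q := by
    rw [eq_neg_of_add_eq_zero_right hsum.symm, dvd_neg]
    split_ifs <;> simp
  exact (homogeneousComponent_isHomogeneous _ P).not_dvd_of_lt
    (homogeneousComponent_isHomogeneous a P) hPa ha (hcop.dvd_of_dvd_mul_right hdvd)

theorem mem_of_mem_homogeneousGaps_of_forall_lt {P Q : MvPolynomial σ R} (hP : P ≠ 0)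
    (hQ : Q ≠ 0) (hcop : IsRelPrime (homogeneousComponent P.totalDegree P)
      (homogeneousComponent Q.totalDegree Q))
    {S : AddSubmonoid ℕ} (hS : homogeneousGaps (P * Q) ⊆ S) {e : ℕ}
    (ih : ∀ e' < e, e' ∈ homogeneousGaps P ∪ homogeneousGaps Q → e' ∈ S)
    (he : e ∈ homogeneousGaps P) : e ∈ S := by
  obtain ⟨a, hPa, rfl⟩ := he
  rcases le_or_gt P.totalDegree a with ha | ha
  · rw [Nat.sub_eq_zero_of_le ha]
    exact zero_mem S
  by_cases hz : homogeneousComponent (a + Q.totalDegree) (P * Q) = 0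
  · obtain ⟨a', ha', b', hb', hab, hne⟩ :=
      exists_homogeneousComponent_mul_ne_zero_of_lt hcop ha hPa hz
    have h₁ := ih (P.totalDegree - a') (by omega) (Or.inl ⟨a', left_ne_zero_of_mul hne, rfl⟩)
    have h₂ := ih (Q.totalDegree - b') (by omega) (Or.inr ⟨b', right_ne_zero_of_mul hne, rfl⟩)
    rw [show P.totalDegree - a = (P.totalDegree - a') + (Q.totalDegree - b') by omega]
    exact add_mem h₁ h₂
  · apply hS
    refine ⟨a + Q.totalDegree, hz, ?_⟩
    rw [totalDegree_mul_of_isDomain hP hQ]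
    omega

theorem homogeneousGaps_union_subset_closure {P Q : MvPolynomial σ R} (hP : P ≠ 0) (hQ : Q ≠ 0)
    (hcop : IsRelPrime (homogeneousComponent P.totalDegree P)
      (homogeneousComponent Q.totalDegree Q)) :
    homogeneousGaps P ∪ homogeneousGaps Q ⊆ AddSubmonoid.closure (homogeneousGaps (P * Q)) := by
  intro e he
  induction e using Nat.strong_induction_on with
  | _ e ih =>
  rcases he with he | he
  · exact mem_of_mem_homogeneousGaps_of_forall_lt hP hQ hcop AddSubmonoid.subset_closure ih he
  · rw [mul_comm] at ih ⊢
    exact mem_of_mem_homogeneousGaps_of_forall_lt hQ hP hcop.symm AddSubmonoid.subset_closure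
      (fun e' he' h => ih e' he' (Set.union_comm _ _ ▸ h)) he

end Domain

end MvPolynomial

theorem AddSubmonoid.mem_closure_image_lt_of_lt {ι : Type*} [LinearOrder ι] {γ : ι → ℕ}
    (hγ : Monotone γ) {i : ι} {x : ℕ} (hx : x ∈ closure (Set.range γ)) (hxi : x < γ i) :
    x ∈ closure (γ '' {j | j < i}) := by
  induction hx using closure_induction with
  | mem _ hx =>
    obtain ⟨j, rfl⟩ := hx
    exact subset_closure ⟨j, hγ.reflect_lt hxi, rfl⟩
  | zero => exact zero_mem _
  | add x y _ _ hx hy => exact add_mem (hx (by omega)) (hy (by omega))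

theorem homComponentZ_natCast_sub {n : ℕ} {𝔽 : Type*} [Field 𝔽] (P : MvPolynomial (Fin n) 𝔽)
    (t e : ℕ) :
    homComponentZ P ((t : ℤ) - e) = if e ≤ t then homogeneousComponent (t - e) P else 0 := by
  rw [homComponentZ]
  split_ifs <;> first | rfl | omega | rw [show ((t : ℤ) - e).toNat = t - e by omega]

theorem component_eq_of_not_mem_span_general {n m : ℕ} {𝔽 : Type*} [Field 𝔽]
    (F Fd : MvPolynomial (Fin n) 𝔽) (G : Fin (m + 1) → MvPolynomial (Fin n) 𝔽)
    (d : ℕ) (γ : Fin (m + 1) → ℕ)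
    (hF : F = Fd + ∑ i, G i)
    (hdeg : F.totalDegree = d)
    (hFd : Fd.IsHomogeneous d)
    (hG : ∀ i, (G i).IsHomogeneous (d - γ i))
    (hpos : 0 < γ 0) (hmono : StrictMono γ) (hle : γ (Fin.last m) ≤ d)
    (hsf : Squarefree Fd)
    (i : Fin (m + 1))
    (hspan : γ i ∉ AddSubmonoid.closure (γ '' {j | j < i}))
    (P Q : MvPolynomial (Fin n) 𝔽) (hP0 : P ≠ 0) (hQ0 : Q ≠ 0)
    (hPQ : F = P * Q) :
    homogeneousComponent (d - γ i) F =
      homogeneousComponent P.totalDegree P * homComponentZ Q ((Q.totalDegree : ℤ) - γ i)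
        + homComponentZ P ((P.totalDegree : ℤ) - γ i) * homogeneousComponent Q.totalDegree Q := by
  have hγ_pos (j : Fin (m + 1)) : 0 < γ j := hpos.trans_le (hmono.monotone (Fin.zero_le j))
  have hγ_le (j : Fin (m + 1)) : γ j ≤ d := (hmono.monotone (Fin.le_last j)).trans hle
  have hst : P.totalDegree + Q.totalDegree = d := by
    rw [← hdeg, hPQ, totalDegree_mul_of_isDomain hP0 hQ0]
  have htop : homogeneousComponent P.totalDegree P * homogeneousComponent Q.totalDegree Q = Fd := by
    rw [← homogeneousComponent_totalDegree_add_mul_s6, ← hPQ, hst, hF,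
      homogeneousComponent_add_sum_self Fd G hFd hG hγ_pos hγ_le]
  have hgaps : homogeneousGaps P ∪ homogeneousGaps Q ⊆ AddSubmonoid.closure (Set.range γ) := by
    refine (homogeneousGaps_union_subset_closure hP0 hQ0 (.of_squarefree_mul (htop ▸ hsf))).trans ?_
    rw [← hPQ, hF, ← AddSubmonoid.closure_insert_zero (Set.range γ)]
    exact AddSubmonoid.closure_mono (homogeneousGaps_add_sum_subset Fd G hFd hG hγ_le (hF ▸ hdeg))
  rw [homComponentZ_natCast_sub, homComponentZ_natCast_sub, mul_ite, ite_mul, mul_zero, zero_mul,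
    hPQ, ← hst]
  refine homogeneousComponent_totalDegree_add_sub_mul (hγ_pos i) (by have := hγ_le i; omega)
    fun a ha b hb hab => ?_
  by_contra hne
  have h₁ := AddSubmonoid.mem_closure_image_lt_of_lt (i := i) hmono.monotone
    (hgaps (Or.inl ⟨a, left_ne_zero_of_mul hne, rfl⟩)) (by omega)
  have h₂ := AddSubmonoid.mem_closure_image_lt_of_lt (i := i) hmono.monotone
    (hgaps (Or.inr ⟨b, right_ne_zero_of_mul hne, rfl⟩)) (by omega)
  exact hspan (show γ i = (P.totalDegree - a) + (Q.totalDegree - b) by omega ▸ add_mem h₁ h₂)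

/-- If `γ_i` is not in the ℕ-span of the earlier gaps and `F = P·Q`, then the homogeneous
component of `F` in degree `d − γ_i` equals `P_s·Q_{t−γ_i} + P_{s−γ_i}·Q_t`, where
`s = deg P`, `t = deg Q`. -/
theorem component_eq_of_not_mem_span {n m : ℕ} {𝔽 : Type*} [Field 𝔽]
    (F Fd : MvPolynomial (Fin n) 𝔽) (G : Fin (m + 1) → MvPolynomial (Fin n) 𝔽)
    (d : ℕ) (γ : Fin (m + 1) → ℕ)
    (hF : F = Fd + ∑ i, G i)
    (hdeg : F.totalDegree = d)
    (hFd : Fd.IsHomogeneous d) (hFd0 : Fd ≠ 0)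
    (hG : ∀ i, (G i).IsHomogeneous (d - γ i)) (hG0 : ∀ i, G i ≠ 0)
    (hpos : 0 < γ 0) (hmono : StrictMono γ) (hle : γ (Fin.last m) ≤ d)
    (hsf : Squarefree Fd)
    (hrp : ∀ D : MvPolynomial (Fin n) 𝔽, D ∣ Fd → (∀ i, D ∣ G i) → IsUnit D)
    (i : Fin (m + 1))
    (hspan : γ i ∉ AddSubmonoid.closure (γ '' {j | j < i}))
    (P Q : MvPolynomial (Fin n) 𝔽) (hP0 : P ≠ 0) (hQ0 : Q ≠ 0)
    (hPQ : F = P * Q) :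
    homogeneousComponent (d - γ i) F =
      homogeneousComponent P.totalDegree P * homComponentZ Q ((Q.totalDegree : ℤ) - γ i)
        + homComponentZ P ((P.totalDegree : ℤ) - γ i) * homogeneousComponent Q.totalDegree Q :=
  component_eq_of_not_mem_span_general F Fd G d γ hF hdeg hFd hG hpos hmono hle hsf i hspan P Q hP0
    hQ0 hPQ
end

section
/- Let 𝔽 be a field and F = F_d + F_{d−γ₁} + ⋯ + F_{d−γ_m} ∈ 𝔽[X₁,…,Xₙ], where F_d and each F_{d−γ_i} are nonzero homogeneous polynomials of degrees d = deg F and d−γ_i respectively, with 0 < γ₁ < ⋯ < γ_m ≤ d, and these are all the nonzero homogeneous components of F. Assume F_d is squarefree and the homogeneous components F_d, F_{d−γ₁}, …, F_{d−γ_m} have no common nonconstant factor. Suppose k is a natural number with k ∉ span_ℕ{γ₁, …, γ_{m−1}} and 0 < k < γ_m, and F = P·Q with P, Q nonzero of degrees s and t respectively. Denote by P_j (resp. Q_j) the homogeneous component of P (resp. Q) in degree j. Then the homogeneous component of F in degree d−k equals P_s·Q_{t−k} + P_{s−k}·Q_t. -/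
open MvPolynomial Finset

section CommSemiring

variable {σ R : Type*} [CommSemiring R]

attribute [local instance] MvPolynomial.gradedAlgebra in
theorem MvPolynomial.homogeneousComponent_mul_s7 (P Q : MvPolynomial σ R) (e : ℕ) :
    homogeneousComponent e (P * Q) =
      ∑ ij ∈ antidiagonal e, homogeneousComponent ij.1 P * homogeneousComponent ij.2 Q := by
  simp only [← decomposition.decompose'_apply, DirectSum.Decomposition.decompose'_eq]
  rw [DirectSum.decompose_mul, DirectSum.coe_mul_apply_eq_sum_antidiagonal]

theorem MvPolynomial.homogeneousComponent_totalDegree_add_mul_s7 (P Q : MvPolynomial σ R) :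
    homogeneousComponent (P.totalDegree + Q.totalDegree) (P * Q) =
      homogeneousComponent P.totalDegree P * homogeneousComponent Q.totalDegree Q := by
  rw [homogeneousComponent_mul_s7, sum_eq_single (P.totalDegree, Q.totalDegree) _ (by simp)]
  rintro ⟨a, b⟩ hab hne
  rw [HasAntidiagonal.mem_antidiagonal] at hab
  rcases lt_or_ge P.totalDegree a with ha | ha
  · rw [homogeneousComponent_eq_zero _ _ ha, zero_mul]
  · rw [homogeneousComponent_eq_zero _ Q (by grind), mul_zero]

theorem MvPolynomial.homogeneousComponent_totalDegree_ne_zero_s7 {P : MvPolynomial σ R}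
    (hP : P ≠ 0) : homogeneousComponent P.totalDegree P ≠ 0 := by
  obtain ⟨c, hc, hdeg⟩ := exists_mem_eq_sup P.support (support_nonempty.2 hP) Finsupp.degree
  refine ne_zero_iff.2 ⟨c, ?_⟩
  rw [coeff_homogeneousComponent, if_pos (hdeg.symm.trans rfl : c.degree = P.totalDegree),
    ← mem_support_iff]
  exact hc

theorem MvPolynomial.homogeneousComponent_sub_add_sum {ι : Type*} [Fintype ι]
    {Fd : MvPolynomial σ R} {G : ι → MvPolynomial σ R} {d : ℕ} {γ : ι → ℕ}
    (hFd : Fd.IsHomogeneous d) (hG : ∀ i, (G i).IsHomogeneous (d - γ i)) (hγ : ∀ i, γ i ≤ d)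
    {j : ℕ} (hj : j ≤ d) (hjγ : ∀ i, γ i ≠ j) :
    homogeneousComponent (d - j) (Fd + ∑ i, G i) = if j = 0 then Fd else 0 := by
  rw [map_add, map_sum, homogeneousComponent_of_mem hFd]
  rw [sum_eq_zero fun i _ ↦ by rw [homogeneousComponent_of_mem (hG i), if_neg]; grind, add_zero]
  grind

end CommSemiring

theorem MvPolynomial.eq_zero_of_mul_add_mul_eq_zero {σ R : Type*} [CommRing R] [IsDomain R]
    [UniqueFactorizationMonoid R] {a b x y : MvPolynomial σ R} (hab : IsRelPrime a b)
    (ha : a ≠ 0) (hx : x ≠ 0 → x.totalDegree < a.totalDegree) (h : a * y + x * b = 0) :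
    x = 0 ∧ y = 0 := by
  have hx0 : x = 0 := by
    by_contra hx0
    have hdvd : a ∣ x := hab.dvd_of_dvd_mul_right ⟨-y, by linear_combination h⟩
    exact (totalDegree_le_of_dvd_of_isDomain hdvd hx0).not_gt (hx hx0)
  subst hx0
  exact ⟨rfl, (mul_eq_zero.1 (by simpa using h)).resolve_left ha⟩

section homComponentZ

variable {n : ℕ} {𝔽 : Type*} [Field 𝔽] (P Q : MvPolynomial (Fin n) 𝔽)

@[simp]
theorem homComponentZ_natCast (j : ℕ) : homComponentZ P j = homogeneousComponent j P := by
  simp [homComponentZ]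

theorem homComponentZ_of_neg {j : ℤ} (hj : j < 0) : homComponentZ P j = 0 :=
  if_neg hj.not_ge

theorem homComponentZ_natCast_sub_s7 {a b : ℕ} (h : b ≤ a) :
    homComponentZ P ((a : ℤ) - b) = homogeneousComponent (a - b) P := by
  rw [← Nat.cast_sub h, homComponentZ_natCast]

theorem le_of_homComponentZ_natCast_sub_ne_zero {a b : ℕ}
    (h : homComponentZ P ((a : ℤ) - b) ≠ 0) : b ≤ a := by
  by_contra! hab
  exact h (homComponentZ_of_neg P (by omega))

theorem totalDegree_homComponentZ_lt {j : ℤ} {s : ℕ} (hj : j < s) (h : homComponentZ P j ≠ 0) :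
    (homComponentZ P j).totalDegree < s := by
  unfold homComponentZ at h ⊢
  split_ifs at h ⊢
  · rw [(homogeneousComponent_isHomogeneous _ P).totalDegree h]
    omega
  · exact absurd rfl h

theorem homogeneousComponent_mul_totalDegree_sub {i : ℕ}
    (hi : i ≤ P.totalDegree + Q.totalDegree) :
    homogeneousComponent (P.totalDegree + Q.totalDegree - i) (P * Q) =
      ∑ uv ∈ antidiagonal i, homComponentZ P ((P.totalDegree : ℤ) - uv.1) *
        homComponentZ Q ((Q.totalDegree : ℤ) - uv.2) := by
  set s := P.totalDegree
  set t := Q.totalDegree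
  have hdrop (uv : ℕ × ℕ) (h : homComponentZ P ((s : ℤ) - uv.1) *
      homComponentZ Q ((t : ℤ) - uv.2) ≠ 0) : uv.1 ≤ s ∧ uv.2 ≤ t :=
    ⟨le_of_homComponentZ_natCast_sub_ne_zero P (left_ne_zero_of_mul h),
      le_of_homComponentZ_natCast_sub_ne_zero Q (right_ne_zero_of_mul h)⟩
  rw [homogeneousComponent_mul_s7]
  refine (sum_bij_ne_zero (fun uv _ _ ↦ (s - uv.1, t - uv.2)) ?_ ?_ ?_ ?_).symm
  · rintro uv huv h
    have := hdrop uv h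
    rw [HasAntidiagonal.mem_antidiagonal] at huv ⊢
    omega
  · rintro uv - h uv' - h' heq
    have := hdrop uv h
    have := hdrop uv' h'
    simp only [Prod.mk.injEq] at heq
    exact Prod.ext (by omega) (by omega)
  · rintro ⟨a, b⟩ hab h
    have ha := not_lt.1 (mt (homogeneousComponent_eq_zero _ P) (left_ne_zero_of_mul h))
    have hb := not_lt.1 (mt (homogeneousComponent_eq_zero _ Q) (right_ne_zero_of_mul h))
    rw [HasAntidiagonal.mem_antidiagonal] at hab
    refine ⟨(s - a, t - b), ?_, ?_, ?_⟩
    · rw [HasAntidiagonal.mem_antidiagonal]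
      omega
    · rwa [homComponentZ_natCast_sub_s7 P (by omega), homComponentZ_natCast_sub_s7 Q (by omega),
        Nat.sub_sub_self ha, Nat.sub_sub_self hb]
    · simp only [Prod.mk.injEq]
      omega
  · rintro uv - h
    obtain ⟨hu, hv⟩ := hdrop uv h
    rw [homComponentZ_natCast_sub_s7 P hu, homComponentZ_natCast_sub_s7 Q hv]

variable {P Q} {S : AddSubmonoid ℕ}

theorem homogeneousComponent_mul_totalDegree_sub_of_forall_lt {i : ℕ} (hi0 : 0 < i)
    (hi : i ≤ P.totalDegree + Q.totalDegree) (hiS : i ∉ S)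
    (hlow : ∀ j, 0 < j → j < i → j ∉ S → homComponentZ P ((P.totalDegree : ℤ) - j) = 0 ∧
      homComponentZ Q ((Q.totalDegree : ℤ) - j) = 0) :
    homogeneousComponent (P.totalDegree + Q.totalDegree - i) (P * Q) =
      homogeneousComponent P.totalDegree P * homComponentZ Q ((Q.totalDegree : ℤ) - i)
        + homComponentZ P ((P.totalDegree : ℤ) - i) * homogeneousComponent Q.totalDegree Q := by
  rw [homogeneousComponent_mul_totalDegree_sub P Q hi, sum_eq_add_of_mem (0, i) (i, 0)
    (by simp) (by simp) (by simp [hi0.ne'])]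
  · simp
  rintro ⟨u, v⟩ huv hne
  rw [HasAntidiagonal.mem_antidiagonal] at huv
  have hu : 0 < u := by grind
  have hv : 0 < v := by grind
  by_cases huS : u ∈ S
  · have hvS : v ∉ S := fun hvS ↦ hiS (huv ▸ S.add_mem huS hvS)
    simp [(hlow v hv (by omega) hvS).2]
  · simp [(hlow u hu (by omega) huS).1]

theorem homComponentZ_sub_eq_zero_of_forall_lt
    (hrel : IsRelPrime (homogeneousComponent P.totalDegree P)
      (homogeneousComponent Q.totalDegree Q))
    (hP : P ≠ 0) {N : ℕ} (hN : N ≤ P.totalDegree + Q.totalDegree)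
    (hgap : ∀ i, 0 < i → i < N → i ∉ S →
      homogeneousComponent (P.totalDegree + Q.totalDegree - i) (P * Q) = 0) :
    ∀ i, 0 < i → i < N → i ∉ S → homComponentZ P ((P.totalDegree : ℤ) - i) = 0 ∧
      homComponentZ Q ((Q.totalDegree : ℤ) - i) = 0 := by
  intro i
  induction i using Nat.strong_induction_on with
  | _ i ih =>
    intro hi0 hiN hiS
    have hPtop := homogeneousComponent_totalDegree_ne_zero_s7 hP
    have h := homogeneousComponent_mul_totalDegree_sub_of_forall_lt hi0 (by omega) hiS
      fun j hj0 hji hjS ↦ ih j hji hj0 (hji.trans hiN) hjS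
    rw [hgap i hi0 hiN hiS] at h
    refine eq_zero_of_mul_add_mul_eq_zero hrel hPtop (fun hne ↦ ?_) h.symm
    rw [(homogeneousComponent_isHomogeneous _ P).totalDegree hPtop]
    exact totalDegree_homComponentZ_lt P (by omega) hne

end homComponentZ

theorem component_eq_of_lt_last_gap_general {n m : ℕ} {𝔽 : Type*} [Field 𝔽]
    (F Fd : MvPolynomial (Fin n) 𝔽) (G : Fin (m + 1) → MvPolynomial (Fin n) 𝔽)
    (d : ℕ) (γ : Fin (m + 1) → ℕ)
    (hF : F = Fd + ∑ i, G i)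
    (hdeg : F.totalDegree = d)
    (hFd : Fd.IsHomogeneous d)
    (hG : ∀ i, (G i).IsHomogeneous (d - γ i))
    (hpos : 0 < γ 0) (hmono : StrictMono γ) (hle : γ (Fin.last m) ≤ d)
    (hsf : Squarefree Fd)
    (k : ℕ)
    (hspan : k ∉ AddSubmonoid.closure (γ '' {i | i < Fin.last m}))
    (hk0 : 0 < k) (hkγ : k < γ (Fin.last m))
    (P Q : MvPolynomial (Fin n) 𝔽) (hP0 : P ≠ 0) (hQ0 : Q ≠ 0)
    (hPQ : F = P * Q) :
    homogeneousComponent (d - k) F =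
      homogeneousComponent P.totalDegree P * homComponentZ Q ((Q.totalDegree : ℤ) - k)
        + homComponentZ P ((P.totalDegree : ℤ) - k) * homogeneousComponent Q.totalDegree Q := by
  set S := AddSubmonoid.closure (γ '' {i | i < Fin.last m})
  have hγ_pos : ∀ i, 0 < γ i := fun i ↦ hpos.trans_le (hmono.monotone (Fin.zero_le i))
  have hγ_le : ∀ i, γ i ≤ d := fun i ↦ (hmono.monotone (Fin.le_last i)).trans hle
  have hγ_ne : ∀ j, j < γ (Fin.last m) → j ∉ S → ∀ i, γ i ≠ j := by
    rintro j hj hjS i rfl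
    rcases (Fin.le_last i).lt_or_eq with hi | rfl
    · exact hjS (AddSubmonoid.subset_closure ⟨i, hi, rfl⟩)
    · exact hj.false
  have hd : P.totalDegree + Q.totalDegree = d := by
    rw [← hdeg, hPQ, totalDegree_mul_of_isDomain hP0 hQ0]
  have htop : homogeneousComponent P.totalDegree P * homogeneousComponent Q.totalDegree Q = Fd := by
    have hFd_top := homogeneousComponent_sub_add_sum hFd hG hγ_le (Nat.zero_le d)
      fun i ↦ (hγ_pos i).ne'
    rw [Nat.sub_zero, if_pos rfl] at hFd_top
    rw [← homogeneousComponent_totalDegree_add_mul_s7, hd, ← hPQ, hF, hFd_top]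
  have hgap : ∀ j, 0 < j → j < k → j ∉ S →
      homogeneousComponent (P.totalDegree + Q.totalDegree - j) (P * Q) = 0 := by
    intro j hj0 hjk hjS
    rw [← hPQ, hd, hF, homogeneousComponent_sub_add_sum hFd hG hγ_le (by omega)
      (hγ_ne j (hjk.trans hkγ) hjS), if_neg hj0.ne']
  rw [hPQ, ← hd]
  exact homogeneousComponent_mul_totalDegree_sub_of_forall_lt hk0 (by omega) hspan
    (homComponentZ_sub_eq_zero_of_forall_lt (squarefree_mul_iff.1 (htop ▸ hsf)).1 hP0 (by omega)
      hgap)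

/-- If `k ∉ span_ℕ{γ₁, …, γ_m}` (the gaps except the last), `0 < k < γ_{m+1}` and `F = P·Q`,
then the homogeneous component of `F` in degree `d − k` equals
`P_s·Q_{t−k} + P_{s−k}·Q_t`, where `s = deg P`, `t = deg Q`. -/
theorem component_eq_of_lt_last_gap {n m : ℕ} {𝔽 : Type*} [Field 𝔽]
    (F Fd : MvPolynomial (Fin n) 𝔽) (G : Fin (m + 1) → MvPolynomial (Fin n) 𝔽)
    (d : ℕ) (γ : Fin (m + 1) → ℕ)
    (hF : F = Fd + ∑ i, G i)
    (hdeg : F.totalDegree = d)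
    (hFd : Fd.IsHomogeneous d) (hFd0 : Fd ≠ 0)
    (hG : ∀ i, (G i).IsHomogeneous (d - γ i)) (hG0 : ∀ i, G i ≠ 0)
    (hpos : 0 < γ 0) (hmono : StrictMono γ) (hle : γ (Fin.last m) ≤ d)
    (hsf : Squarefree Fd)
    (hrp : ∀ D : MvPolynomial (Fin n) 𝔽, D ∣ Fd → (∀ i, D ∣ G i) → IsUnit D)
    (k : ℕ)
    (hspan : k ∉ AddSubmonoid.closure (γ '' {i | i < Fin.last m}))
    (hk0 : 0 < k) (hkγ : k < γ (Fin.last m))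
    (P Q : MvPolynomial (Fin n) 𝔽) (hP0 : P ≠ 0) (hQ0 : Q ≠ 0)
    (hPQ : F = P * Q) :
    homogeneousComponent (d - k) F =
      homogeneousComponent P.totalDegree P * homComponentZ Q ((Q.totalDegree : ℤ) - k)
        + homComponentZ P ((P.totalDegree : ℤ) - k) * homogeneousComponent Q.totalDegree Q :=
  component_eq_of_lt_last_gap_general F Fd G d γ hF hdeg hFd hG hpos hmono hle hsf k hspan hk0 hkγ P
    Q hP0 hQ0 hPQ
end
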